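/- In 𝔤 = ℝW ⊕ 𝔰𝔩(2,ℝ) with brackets [X,Y] = -Z, [Z,X] = Y, [Z,Y] = -X and W central, let b > c > 0 with b² - c² = b, ψ = b·y + c·z, θ = w, and Ω_ψ = ψ∧w + dψ, with metric h(U,V) = Ω_ψ(JU,V) for J given by JY = X, JX = -Y, JW = Z, JZ = -W. Then the Lee field ξ = (1/(b²-c²))(bW + cX) is not a Killing field: there exist U,V ∈ 𝔤 with h([ξ,U],V) + h(U,[ξ,V]) ≠ 0. -/

import Mathlib

/-!
Write `k = c / (b² - c²) > 0`. Since `W` is central, `[ξ, Y] = k [X, Y] = -k Z`, so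
`J [ξ, Y] = k W` and `J Y = X`. The two terms of the Killing defect at `U = V = Y` are then
`Ω_ψ(k W, Y) = -k ψ(Y)` (only `ψ ∧ w` contributes, `W` being central) and
`Ω_ψ(X, -k Z) = -ψ(k Y)` (only `dψ` contributes, `ψ` and `w` vanishing on `X`),
so the defect equals `-2 k b ≠ 0`.
-/

open Module

section LckForm

variable {L : Type*} [LieRing L] [LieAlgebra ℝ L] (ψ w : Dual ℝ L)

/-- `Ω_ψ = ψ ∧ w + dψ`, with the Chevalley–Eilenberg differential `dψ(U, V) = -ψ ⁅U, V⁆`. -/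
def lckForm (U V : L) : ℝ :=
  ψ U * w V - ψ V * w U - ψ ⁅U, V⁆

lemma lckForm_smul_left_of_central {W : L} (hW : ∀ U : L, ⁅W, U⁆ = 0)
    (hψW : ψ W = 0) (hwW : w W = 1) (t : ℝ) (V : L) :
    lckForm ψ w (t • W) V = -(t * ψ V) := by
  simp [lckForm, smul_lie, hW, hψW, hwW, mul_comm]

lemma lckForm_of_mem_ker_left {U : L} (hψU : ψ U = 0) (hwU : w U = 0) (V : L) :
    lckForm ψ w U V = -ψ ⁅U, V⁆ := by
  simp [lckForm, hψU, hwU]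

end LckForm

theorem sl2_lck_not_vaisman_general
    (L : Type) [LieRing L] [LieAlgebra ℝ L] (bs : Module.Basis (Fin 4) ℝ L)
    (hW : ∀ U : L, ⁅bs 0, U⁆ = 0)
    (hXY : ⁅bs 1, bs 2⁆ = -bs 3) (hZX : ⁅bs 3, bs 1⁆ = bs 2)
    (J : L →ₗ[ℝ] L)
    (hJY : J (bs 2) = bs 1)
    (hJZ : J (bs 3) = -bs 0)
    (b c : ℝ) (hbc : b > c) (hc0 : c > 0)
    (ψ : L → ℝ) (hψ : ∀ U : L, ψ U = b * bs.coord 2 U + c * bs.coord 3 U)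
    (Ω : L → L → ℝ)
    (hΩ : ∀ U V : L, Ω U V
      = (ψ U * bs.coord 0 V - ψ V * bs.coord 0 U) + -(ψ ⁅U, V⁆))
    (h : L → L → ℝ) (hh : ∀ U V : L, h U V = Ω (J U) V)
    (ξ : L) (hξ : ξ = (1 / (b ^ 2 - c ^ 2)) • (b • bs 0 + c • bs 1)) :
    ∃ U V : L, h ⁅ξ, U⁆ V + h U ⁅ξ, V⁆ ≠ 0 := by
  set ψ' : Dual ℝ L := b • bs.coord 2 + c • bs.coord 3
  have hψ' : ψ = ψ' := funext fun U => by simp [ψ', hψ]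
  subst hψ'
  have hΩ' : Ω = lckForm ψ' (bs.coord 0) := by
    funext U V
    rw [hΩ, lckForm]
    ring
  subst hΩ'
  set k := c / (b ^ 2 - c ^ 2) with hk
  have hk0 : 0 < k := div_pos hc0 (by nlinarith)
  have hξY : ⁅ξ, bs 2⁆ = -(k • bs 3) := by
    rw [hξ, smul_lie, add_lie, smul_lie, smul_lie, hW, hXY, smul_zero, zero_add,
      smul_neg, smul_neg, smul_smul, hk, one_div, inv_mul_eq_div]
  have hXZ : ⁅bs 1, -(k • bs 3)⁆ = k • bs 2 := by
    rw [lie_neg, lie_smul, ← lie_skew, hZX, smul_neg, neg_neg]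
  have hψY : ψ' (bs 2) = b := by simp [ψ', Basis.coord_apply]
  have hψkY : ψ' (k • bs 2) = k * b := by rw [map_smul, hψY, smul_eq_mul]
  have hleft : h ⁅ξ, bs 2⁆ (bs 2) = -(k * b) := by
    rw [hh, hξY, map_neg, map_smul, hJZ, smul_neg, neg_neg,
      lckForm_smul_left_of_central _ _ hW (by simp [ψ', Basis.coord_apply])
        (by simp [Basis.coord_apply]), hψY]
  have hright : h (bs 2) ⁅ξ, bs 2⁆ = -(k * b) := by
    rw [hh, hJY, hξY, lckForm_of_mem_ker_left _ _ (by simp [ψ', Basis.coord_apply])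
        (by simp [Basis.coord_apply]), hXZ, hψkY]
  refine ⟨bs 2, bs 2, ?_⟩
  rw [hleft, hright]
  have : 0 < k * b := mul_pos hk0 (hc0.trans hbc)
  linarith

/-- On 𝔤 = ℝW ⊕ 𝔰𝔩(2,ℝ) with b > c > 0, b² - c² = b, ψ = b·y + c·z,
Ω_ψ = ψ∧w + dψ and h(U,V) = Ω_ψ(JU,V), the Lee field
ξ = (1/(b²-c²))(bW + cX) is not Killing: h([ξ,U],V) + h(U,[ξ,V]) ≠ 0 for
some U,V (a non-Vaisman l.c.K. structure). -/
theorem sl2_lck_not_vaisman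
    (L : Type) [LieRing L] [LieAlgebra ℝ L] (bs : Module.Basis (Fin 4) ℝ L)
    (hW : ∀ U : L, ⁅bs 0, U⁆ = 0)
    (hXY : ⁅bs 1, bs 2⁆ = -bs 3) (hZX : ⁅bs 3, bs 1⁆ = bs 2)
    (hZY : ⁅bs 3, bs 2⁆ = -bs 1)
    (J : L →ₗ[ℝ] L)
    (hJY : J (bs 2) = bs 1) (hJX : J (bs 1) = -bs 2)
    (hJW : J (bs 0) = bs 3) (hJZ : J (bs 3) = -bs 0)
    (b c : ℝ) (hbc : b > c) (hc0 : c > 0) (hb : b ^ 2 - c ^ 2 = b)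
    (ψ : L → ℝ) (hψ : ∀ U : L, ψ U = b * bs.coord 2 U + c * bs.coord 3 U)
    (Ω : L → L → ℝ)
    (hΩ : ∀ U V : L, Ω U V
      = (ψ U * bs.coord 0 V - ψ V * bs.coord 0 U) + -(ψ ⁅U, V⁆))
    (h : L → L → ℝ) (hh : ∀ U V : L, h U V = Ω (J U) V)
    (ξ : L) (hξ : ξ = (1 / (b ^ 2 - c ^ 2)) • (b • bs 0 + c • bs 1)) :
    ∃ U V : L, h ⁅ξ, U⁆ V + h U ⁅ξ, V⁆ ≠ 0 :=
  sl2_lck_not_vaisman_general L bs hW hXY hZX J hJY hJZ b c hbc hc0 ψ hψ Ω hΩ h hh ξ hξ
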